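/- Let G be a simple graph with a'(G) = η ≥ 2. Then a'(G □ P_2) ≤ η + 1, where P_2 is the path on two vertices (a single edge). -/

import Mathlib

open SimpleGraph

/-- A proper edge colouring: edges sharing a vertex get distinct colours. -/
def IsProperEdgeColoring {V : Type*} (G : SimpleGraph V) {S : Type*} (c : Sym2 V → S) : Prop :=
  ∀ e₁ ∈ G.edgeSet, ∀ e₂ ∈ G.edgeSet, e₁ ≠ e₂ → (∃ x, x ∈ e₁ ∧ x ∈ e₂) → c e₁ ≠ c e₂

/-- An acyclic edge colouring: proper, and every cycle uses at least three colours. -/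
def IsAcyclicEdgeColoring {V : Type*} (G : SimpleGraph V) {S : Type*} (c : Sym2 V → S) : Prop :=
  IsProperEdgeColoring G c ∧
  ∀ (v : V) (w : G.Walk v v), w.IsCycle →
    ∃ e₁ ∈ w.edges, ∃ e₂ ∈ w.edges, ∃ e₃ ∈ w.edges,
      c e₁ ≠ c e₂ ∧ c e₁ ≠ c e₃ ∧ c e₂ ≠ c e₃

/-- The acyclic chromatic index: least number of colours in an acyclic edge colouring. -/
noncomputable def acyclicChromaticIndex {V : Type*} (G : SimpleGraph V) : ℕ :=
  sInf {n | ∃ c : Sym2 V → Fin n, IsAcyclicEdgeColoring G c}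

/-- A maximal bichromatic path with colour pair {a, b}: a path whose edges use exactly
the colours a and b, not extendable at either end within these colours. -/
def IsMaxBichromaticPath {V S : Type*} (G : SimpleGraph V) (c : Sym2 V → S)
    (a b : S) {u v : V} (w : G.Walk u v) : Prop :=
  w.IsPath ∧ a ≠ b ∧ (∀ e ∈ w.edges, c e = a ∨ c e = b) ∧
  a ∈ w.edges.map c ∧ b ∈ w.edges.map c ∧
  (∀ x, ∀ h : G.Adj x u, ¬((Walk.cons h w).IsPath ∧ (c s(x, u) = a ∨ c s(x, u) = b))) ∧
  (∀ y, ∀ h : G.Adj v y, ¬((w.concat h).IsPath ∧ (c s(v, y) = a ∨ c s(v, y) = b)))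

/-- The auxiliary graph: G plus an edge between the endpoints of every maximal
bichromatic path of the colouring c. -/
def auxGraph {V S : Type*} (G : SimpleGraph V) (c : Sym2 V → S) : SimpleGraph V where
  Adj u v := u ≠ v ∧ (G.Adj u v ∨
    ∃ a b, (∃ w : G.Walk u v, IsMaxBichromaticPath G c a b w) ∨
           (∃ w : G.Walk v u, IsMaxBichromaticPath G c a b w))
  symm := by
    constructor
    rintro u v ⟨hne, h | ⟨a, b, h⟩⟩
    · exact ⟨hne.symm, Or.inl h.symm⟩
    · exact ⟨hne.symm, Or.inr ⟨a, b, h.symm⟩⟩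
  loopless := ⟨fun v h => h.1 rfl⟩

/-- The number of maximal bichromatic paths having `v` as an endpoint. -/
noncomputable def maxBichromPathsAt {V S : Type*} (G : SimpleGraph V) (c : Sym2 V → S)
    (v : V) : ℕ :=
  {p : (u : V) × G.Walk v u | ∃ a b, IsMaxBichromaticPath G c a b p.2}.ncard


/-! Colour the two copies of `G` by `τ 0 ∘ c` and `τ 1 ∘ c`, where `c` is an optimal acyclic
colouring and `τ 0 x ≠ τ 1 x` for every colour `x`, and give every matching edge the new colour
`none`. Suppose a cycle `C` of `G □ P₂` were bichromatic. Either `C` lies in one copy, or it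
contains a matching edge and then all its other edges share one colour `x`. In both cases no edge
of `G` is used in both copies, so projecting `C` to `G` gives a closed trail, which contains a
cycle of `G`. Its `c`-colours are the two colours of `C` in the first case, and lie in
`{(τ 0)⁻¹ x, (τ 1)⁻¹ x}` in the second, contradicting the acyclicity of `c`. -/

section

variable {α β S : Type*} {G : SimpleGraph α} {H : SimpleGraph β}

lemma isProperEdgeColoring_iff {c : Sym2 α → S} :
    IsProperEdgeColoring G c ↔
      ∀ ⦃x y z⦄, G.Adj x y → G.Adj x z → y ≠ z → c s(x, y) ≠ c s(x, z) := by
  refine ⟨fun hc x y z hy hz hyz =>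
    hc _ hy _ hz (mt Sym2.congr_right.mp hyz) ⟨x, by simp, by simp⟩,
    fun hc e₁ he₁ e₂ he₂ hne ⟨x, hx₁, hx₂⟩ => ?_⟩
  obtain ⟨y, rfl⟩ := Sym2.mem_iff_exists.mp hx₁
  obtain ⟨z, rfl⟩ := Sym2.mem_iff_exists.mp hx₂
  exact hc he₁ he₂ (by rintro rfl; exact hne rfl)

lemma IsProperEdgeColoring.comp {T : Type*} {c : Sym2 α → S} (hc : IsProperEdgeColoring G c)
    {f : S → T} (hf : Function.Injective f) : IsProperEdgeColoring G (f ∘ c) :=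
  fun e₁ he₁ e₂ he₂ hne hx => hf.ne (hc e₁ he₁ e₂ he₂ hne hx)

lemma IsAcyclicEdgeColoring.comp {T : Type*} {c : Sym2 α → S} (hc : IsAcyclicEdgeColoring G c)
    {f : S → T} (hf : Function.Injective f) : IsAcyclicEdgeColoring G (f ∘ c) := by
  refine ⟨hc.1.comp hf, fun v w hw => ?_⟩
  obtain ⟨e₁, h₁, e₂, h₂, e₃, h₃, h₁₂, h₁₃, h₂₃⟩ := hc.2 v w hw
  exact ⟨e₁, h₁, e₂, h₂, e₃, h₃, hf.ne h₁₂, hf.ne h₁₃, hf.ne h₂₃⟩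

namespace SimpleGraph

lemma mem_edgeSet_boxProd {e : Sym2 (α × β)} (he : e ∈ (G □ H).edgeSet) :
    (∃ a b j, G.Adj a b ∧ e = s((a, j), (b, j))) ∨ ∃ a i j, H.Adj i j ∧ e = s((a, i), (a, j)) := by
  induction e using Sym2.ind with
  | _ x y =>
    obtain ⟨a, i⟩ := x
    obtain ⟨b, j⟩ := y
    rcases (mem_edgeSet _).mp he with ⟨hab, rfl : i = j⟩ | ⟨hij, rfl : a = b⟩
    · exact .inl ⟨a, b, i, hab, rfl⟩
    · exact .inr ⟨a, i, j, hij, rfl⟩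

lemma pathGraph_two_neighborSet_subsingleton (j : Fin 2) :
    ((pathGraph 2).neighborSet j).Subsingleton := by
  intro k hk l hl
  rw [pathGraph_two_eq_top, mem_neighborSet, top_adj] at hk hl
  revert j k l; decide

end SimpleGraph

def boxProdColoring [DecidableEq β] (c : β → Sym2 α → S) : Sym2 (α × β) → Option S :=
  Sym2.lift ⟨fun x y => if x.2 = y.2 then some (c x.2 s(x.1, y.1)) else none, fun x y => by
    by_cases h : x.2 = y.2 <;> simp [h, eq_comm, Sym2.eq_swap]⟩

@[simp]
lemma boxProdColoring_mk [DecidableEq β] (c : β → Sym2 α → S) (x y : α × β) :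
    boxProdColoring c s(x, y) = if x.2 = y.2 then some (c x.2 s(x.1, y.1)) else none :=
  rfl

-- For an edge `e` of `G □ H`, `(e.map Prod.fst).IsDiag` says that `e` is an `H`-edge.
lemma boxProdColoring_eq_none [DecidableEq β] (c : β → Sym2 α → S) {e : Sym2 (α × β)}
    (he : e ∈ (G □ H).edgeSet) (hdiag : (e.map Prod.fst).IsDiag) : boxProdColoring c e = none := by
  rcases mem_edgeSet_boxProd he with ⟨a, b, j, hab, rfl⟩ | ⟨a, i, j, hij, rfl⟩
  · exact absurd (by simpa using hdiag) hab.ne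
  · simp [hij.ne]

lemma IsProperEdgeColoring.boxProdColoring [DecidableEq β] {c : β → Sym2 α → S}
    (hc : ∀ j, IsProperEdgeColoring G (c j)) (hH : ∀ j, (H.neighborSet j).Subsingleton) :
    IsProperEdgeColoring (G □ H) (boxProdColoring c) := by
  rw [isProperEdgeColoring_iff]
  rintro ⟨a, i⟩ ⟨b, j⟩ ⟨d, k⟩ hy hz hyz
  rcases boxProd_adj.mp hy with ⟨hab, rfl : i = j⟩ | ⟨hij, rfl : a = b⟩ <;>
    rcases boxProd_adj.mp hz with ⟨had, rfl : i = k⟩ | ⟨hik, rfl : a = d⟩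
  · have hbd : b ≠ d := by rintro rfl; exact hyz rfl
    simpa using isProperEdgeColoring_iff.mp (hc i) hab had hbd
  · simp [hik.ne]
  · simp [hij.ne]
  · exact absurd (congrArg (Prod.mk a) (hH i hij hik)) hyz

namespace SimpleGraph.Walk

lemma snd_eq_of_forall_not_isDiag {x y : α × β} (w : (G □ H).Walk x y)
    (hw : ∀ e ∈ w.edges, ¬ (e.map Prod.fst).IsDiag) {u : α × β} (hu : u ∈ w.support) :
    u.2 = x.2 := by
  induction w with
  | nil => simp_all
  | @cons x z y h w ih =>
    rw [support_cons, List.mem_cons] at hu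
    rcases hu with rfl | hu
    · rfl
    have hxz : x.2 = z.2 := by
      rcases boxProd_adj.mp h with h | h
      · exact h.2
      · exact absurd h.2 (by simpa using hw s(x, z) (by simp))
    rw [ih (fun e he => hw e (by simp [he])) hu, hxz]

lemma IsCycle.exists_not_isDiag_map_fst {v : α × β} {w : (G □ H).Walk v v} (hw : w.IsCycle)
    (hH : ∀ j, (H.neighborSet j).Subsingleton) :
    ∃ e ∈ w.edges, ¬ (e.map Prod.fst).IsDiag := by
  cases w with
  | nil => exact absurd hw.not_nil (by simp)
  | @cons _ z _ h₁ p =>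
    cases p with
    | nil => simpa using hw.three_le_length
    | @cons _ z' _ h₂ q =>
      by_contra! hdiag
      have hfst₁ : v.1 = z.1 := by simpa using hdiag s(v, z) (by simp)
      have hfst₂ : z.1 = z'.1 := by simpa using hdiag s(z, z') (by simp)
      have hv : H.Adj z.2 v.2 := ((boxProd_adj.mp h₁).resolve_left fun h => h.1.ne hfst₁).1.symm
      have hz' : H.Adj z.2 z'.2 := ((boxProd_adj.mp h₂).resolve_left fun h => h.1.ne hfst₂).1
      obtain rfl : v = z' := Prod.ext (hfst₁.trans hfst₂) (hH _ hv hz')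
      simpa [Sym2.eq_swap] using hw.edges_nodup

section ofBoxProdLeft

variable [DecidableEq α] [DecidableEq β] [DecidableRel G.Adj]

lemma edges_ofBoxProdLeft {x y : α × β} (w : (G □ H).Walk x y) :
    w.ofBoxProdLeft.edges =
      (w.edges.filter fun e => ¬ (e.map Prod.fst).IsDiag).map (Sym2.map Prod.fst) := by
  induction w with
  | nil => simp [ofBoxProdLeft]
  | @cons x z y h w ih =>
    unfold ofBoxProdLeft
    rcases boxProd_adj.mp h with h' | h'
    · simp [Or.by_cases, h', ih, h'.1.ne]
    · obtain ⟨a, i⟩ := x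
      obtain ⟨b, j⟩ := z
      obtain ⟨hij, rfl : a = b⟩ := h'
      simp [Or.by_cases, hij.ne, ih]

lemma exists_of_mem_edges_ofBoxProdLeft {x y : α × β} {w : (G □ H).Walk x y} {g : Sym2 α}
    (hg : g ∈ w.ofBoxProdLeft.edges) : ∃ a b j, s((a, j), (b, j)) ∈ w.edges ∧ g = s(a, b) := by
  rw [edges_ofBoxProdLeft] at hg
  obtain ⟨e, he, rfl⟩ := List.mem_map.mp hg
  obtain ⟨he, hdiag⟩ := List.mem_filter.mp he
  rcases mem_edgeSet_boxProd (w.edges_subset_edgeSet he) with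
    ⟨a, b, j, -, rfl⟩ | ⟨a, i, j, -, rfl⟩
  · exact ⟨a, b, j, he, rfl⟩
  · simp at hdiag

lemma IsTrail.ofBoxProdLeft {x y : α × β} {w : (G □ H).Walk x y} (hw : w.IsTrail)
    (hinj : ∀ a b i j, s((a, i), (b, i)) ∈ w.edges → s((a, j), (b, j)) ∈ w.edges → i = j) :
    w.ofBoxProdLeft.IsTrail := by
  rw [isTrail_def, edges_ofBoxProdLeft]
  refine (hw.edges_nodup.filter _).map_on fun e he e' he' heq => ?_
  obtain ⟨he, hd⟩ := List.mem_filter.mp he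
  obtain ⟨he', hd'⟩ := List.mem_filter.mp he'
  rcases mem_edgeSet_boxProd (w.edges_subset_edgeSet he) with
    ⟨a, b, i, -, rfl⟩ | ⟨_, _, _, -, rfl⟩
  swap; · simp at hd
  rcases mem_edgeSet_boxProd (w.edges_subset_edgeSet he') with
    ⟨a', b', j, -, rfl⟩ | ⟨_, _, _, -, rfl⟩
  swap; · simp at hd'
  simp only [Sym2.map_mk, Sym2.eq_iff] at heq
  rcases heq with ⟨rfl, rfl⟩ | ⟨rfl, rfl⟩
  · rw [hinj _ _ _ _ he he']
  · rw [Sym2.eq_swap] at he'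
    rw [hinj _ _ _ _ he he', Sym2.eq_swap]

end ofBoxProdLeft

lemma IsCycle.exists_isCycle_of_boxProd {v : α × β} {w : (G □ H).Walk v v} (hw : w.IsCycle)
    (hH : ∀ j, (H.neighborSet j).Subsingleton)
    (hinj : ∀ a b i j, s((a, i), (b, i)) ∈ w.edges → s((a, j), (b, j)) ∈ w.edges → i = j) :
    ∃ (u : α) (z : G.Walk u u), z.IsCycle ∧
      ∀ g ∈ z.edges, ∃ a b j, s((a, j), (b, j)) ∈ w.edges ∧ g = s(a, b) := by
  classical
  have hne : w.ofBoxProdLeft ≠ nil := by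
    obtain ⟨e, he, hdiag⟩ := hw.exists_not_isDiag_map_fst hH
    intro hnil
    have hedges := congrArg edges hnil
    rw [edges_ofBoxProdLeft, edges_nil, List.map_eq_nil_iff, List.filter_eq_nil_iff] at hedges
    exact hedges e he (by simpa using hdiag)
  exact ⟨_, _, (hw.isTrail.ofBoxProdLeft hinj).isCycle_cycleBypass hne,
    fun g hg => exists_of_mem_edges_ofBoxProdLeft (edges_cycleBypass_subset_edges _ hg)⟩

lemma snd_eq_or_color_eq_of_boxProdColoring [DecidableEq β] {c : β → Sym2 α → S}
    {x y : α × β} (w : (G □ H).Walk x y)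
    (hw : ∀ e₁ ∈ w.edges, ∀ e₂ ∈ w.edges, ∀ e₃ ∈ w.edges, boxProdColoring c e₁ ≠
      boxProdColoring c e₂ → boxProdColoring c e₁ ≠ boxProdColoring c e₃ →
        boxProdColoring c e₂ = boxProdColoring c e₃) :
    (∀ a b j, s((a, j), (b, j)) ∈ w.edges → j = x.2) ∨
      ∀ a b i a' b' j, s((a, i), (b, i)) ∈ w.edges → s((a', j), (b', j)) ∈ w.edges →
        c i s(a, b) = c j s(a', b') := by
  by_cases hvert : ∃ e ∈ w.edges, (e.map Prod.fst).IsDiag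
  · obtain ⟨e, he, hdiag⟩ := hvert
    have hnone := boxProdColoring_eq_none c (w.edges_subset_edgeSet he) hdiag
    refine .inr fun a b i a' b' j h h' => Option.some.inj ?_
    simpa using hw e he _ h _ h' (by simp [hnone]) (by simp [hnone])
  · push Not at hvert
    exact .inl fun a b j h => snd_eq_of_forall_not_isDiag w hvert (w.fst_mem_support_of_mem_edges h)

end SimpleGraph.Walk

theorem IsAcyclicEdgeColoring.boxProdColoring_pathGraph_two {c : Sym2 α → S}
    (hc : IsAcyclicEdgeColoring G c) {τ : Fin 2 → Equiv.Perm S} (hτ : ∀ x, τ 0 x ≠ τ 1 x) :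
    IsAcyclicEdgeColoring (G □ pathGraph 2) (boxProdColoring fun j => τ j ∘ c) := by
  have hH := pathGraph_two_neighborSet_subsingleton
  set D := boxProdColoring fun j => τ j ∘ c
  have hD : IsProperEdgeColoring _ D :=
    IsProperEdgeColoring.boxProdColoring (fun j => hc.1.comp (τ j).injective) hH
  have hcol : ∀ a b j, D s((a, j), (b, j)) = some (τ j (c s(a, b))) := by simp [D]
  refine ⟨hD, fun v w hw => ?_⟩
  by_contra! hfew
  have hsplit := w.snd_eq_or_color_eq_of_boxProdColoring hfew
  have hinj : ∀ a b i j, s((a, i), (b, i)) ∈ w.edges → s((a, j), (b, j)) ∈ w.edges → i = j := by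
    intro a b i j h h'
    rcases hsplit with hlayer | hsame
    · exact (hlayer _ _ _ h).trans (hlayer _ _ _ h').symm
    · have := hsame _ _ _ _ _ _ h h'
      revert this
      fin_cases i <;> fin_cases j <;> simp [hτ, (hτ _).symm]
  obtain ⟨u, z, hz, hlift⟩ := hw.exists_isCycle_of_boxProd hH hinj
  obtain ⟨g₁, h₁, g₂, h₂, g₃, h₃, h₁₂, h₁₃, h₂₃⟩ := hc.2 u z hz
  obtain ⟨a₁, b₁, j₁, m₁, rfl⟩ := hlift g₁ h₁
  obtain ⟨a₂, b₂, j₂, m₂, rfl⟩ := hlift g₂ h₂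
  obtain ⟨a₃, b₃, j₃, m₃, rfl⟩ := hlift g₃ h₃
  rcases hsplit with hlayer | hsame
  · obtain rfl := hlayer _ _ _ m₁
    obtain rfl := hlayer _ _ _ m₂
    obtain rfl := hlayer _ _ _ m₃
    refine absurd (hfew _ m₁ _ m₂ _ m₃ ?_ ?_) ?_ <;> simpa [hcol]
  · rcases (by decide : ∀ i j k : Fin 2, i = j ∨ i = k ∨ j = k) j₁ j₂ j₃ with rfl | rfl | rfl
    · exact h₁₂ ((τ j₁).injective (hsame _ _ _ _ _ _ m₁ m₂))
    · exact h₁₃ ((τ j₁).injective (hsame _ _ _ _ _ _ m₁ m₃))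
    · exact h₂₃ ((τ j₂).injective (hsame _ _ _ _ _ _ m₂ m₃))

end

/-- if a'(G) = η ≥ 2 then a'(G □ P₂) ≤ η + 1. -/
theorem acyclicChromaticIndex_boxProd_pathGraph_two {α : Type*}
    (G : SimpleGraph α) (η : ℕ) (hη : acyclicChromaticIndex G = η) (h2 : 2 ≤ η) :
    acyclicChromaticIndex (G □ pathGraph 2) ≤ η + 1 := by
  obtain ⟨c, hc⟩ : ∃ c : Sym2 α → Fin η, IsAcyclicEdgeColoring G c := by
    rw [← hη]
    exact Nat.sInf_mem (Nat.nonempty_of_pos_sInf (hη ▸ (by omega : 0 < η)))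
  have hrot : ∀ x, (1 : Equiv.Perm (Fin η)) x ≠ finRotate η x := fun x =>
    (Equiv.Perm.mem_support.mp (by simp [support_finRotate_of_le h2])).symm
  exact Nat.sInf_le ⟨_, (hc.boxProdColoring_pathGraph_two (τ := ![1, finRotate η]) hrot).comp
    finSuccEquivLast.symm.injective⟩
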